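/- Let I ⊆ ℝ be a compact interval and f : I → I a continuous map which is strongly indecomposable. Then there exist a positive integer n and pairwise disjoint nondegenerate closed subintervals J_0, J_1, …, J_{n-1} ⊆ I with f(J_i) = J_{(i+1) mod n} for i = 0, …, n-1, such that, setting E = J_0 ∪ … ∪ J_{n-1}, the restriction f|_E is topologically transitive with a dense set of periodic points, and for each i = 0, …, n-1 the restriction of f^n to J_i is topologically transitive with a dense set of periodic points. -/

import Mathlib

/-!
Let `M` be the intersection of all closed `f`-invariant sets with nonempty interior. Every open
cover has a countable subcover, so strong indecomposability makes `M` itself such a set, the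
smallest one. Minimality does the rest. `f` collapses no subinterval of `M`: the orbit closure of
the collapsed point would have interior, hence contain `M`, and yet be the finite orbit of a
periodic point. Consequently the forward orbit of any open set meeting the interior of `M` is
dense in `M`, so `f` is transitive on `M`, and transitivity on intervals yields periodic points
through the intermediate value theorem. The components of `M` through the iterates of a point of
its interior are permuted cyclically by `f`; there are finitely many, say `n`, they cover `M`, and
an orbit can only return to a component after a multiple of `n` steps, so `f^[n]` inherits
transitivity and dense periodic points on each of them.
-/

/-- A self-map of a topological space is topologically transitive if for any two
nonempty open sets `U, V` some iterate image of `U` meets `V`. -/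
def TopTransitive {Y : Type*} [TopologicalSpace Y] (g : Y → Y) : Prop :=
  ∀ U V : Set Y, IsOpen U → IsOpen V → U.Nonempty → V.Nonempty →
    ∃ k : ℕ, (g^[k] '' U ∩ V).Nonempty

/-- A self-map is strongly indecomposable if for every sequence of invariant closed
sets with nonempty interior, the intersection has nonempty interior. -/
def StronglyIndecomposable {Y : Type*} [TopologicalSpace Y] (g : Y → Y) : Prop :=
  ∀ A : ℕ → Set Y, (∀ n, IsClosed (A n)) → (∀ n, g '' A n ⊆ A n) →
    (∀ n, (interior (A n)).Nonempty) → (interior (⋂ n, A n)).Nonempty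

/-- The periodic points of `g` are dense. -/
def DensePeriodicPts {Y : Type*} [TopologicalSpace Y] (g : Y → Y) : Prop :=
  Dense {x : Y | ∃ k : ℕ, 1 ≤ k ∧ g^[k] x = x}

open Set Function

theorem Function.periodicPts_iterate_subset {α : Type*} {g : α → α} {m : ℕ} (hm : 0 < m) :
    periodicPts g^[m] ⊆ periodicPts g :=
  fun _ ⟨k, hk, hz⟩ => ⟨m * k, Nat.mul_pos hm hk, by rwa [IsPeriodicPt, iterate_mul]⟩

theorem Function.iterate_eq_iterate_iff_modEq {α : Type*} {g : α → α} {a : α}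
    (ha : a ∈ periodicPts g) {m n : ℕ} :
    g^[m] a = g^[n] a ↔ m ≡ n [MOD minimalPeriod g a] := by
  have hpos := minimalPeriod_pos_of_mem_periodicPts ha
  rw [← iterate_mod_minimalPeriod_eq, ← iterate_mod_minimalPeriod_eq (n := n)]
  exact iterate_eq_iterate_iff_of_lt_minimalPeriod (Nat.mod_lt _ hpos) (Nat.mod_lt _ hpos)

section FatInvariant

variable {Y : Type*} [TopologicalSpace Y] {f : Y → Y}

def IsFatInvariant (f : Y → Y) (A : Set Y) : Prop :=
  IsClosed A ∧ MapsTo f A A ∧ (interior A).Nonempty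

def fatCore (f : Y → Y) : Set Y :=
  ⋂₀ {A | IsFatInvariant f A}

theorem fatCore_subset {A : Set Y} (hA : IsFatInvariant f A) : fatCore f ⊆ A :=
  sInter_subset_of_mem hA

theorem isClosed_fatCore : IsClosed (fatCore f) :=
  isClosed_sInter fun _ hA => hA.1

theorem mapsTo_fatCore : MapsTo f (fatCore f) (fatCore f) :=
  fun _ hx A hA => hA.2.1 (hx A hA)

theorem isFatInvariant_univ [Nonempty Y] : IsFatInvariant f univ :=
  ⟨isClosed_univ, mapsTo_univ _ _, by rw [interior_univ]; exact univ_nonempty⟩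

/-- By Lindelöf, `⋂₀ S` is already the intersection of a countable subfamily, to which strong
indecomposability applies. -/
theorem StronglyIndecomposable.isFatInvariant_sInter [SecondCountableTopology Y] [Nonempty Y]
    (hstr : StronglyIndecomposable f) {S : Set (Set Y)} (hS : ∀ A ∈ S, IsFatInvariant f A) :
    IsFatInvariant f (⋂₀ S) := by
  refine ⟨isClosed_sInter fun A hA => (hS A hA).1, fun x hx A hA => (hS A hA).2.1 (hx A hA), ?_⟩
  obtain ⟨T, hTc, hTS, hT⟩ := TopologicalSpace.isOpen_sUnion_countable (compl '' S)
    (by rintro _ ⟨A, hA, rfl⟩; exact (hS A hA).1.isOpen_compl)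
  have hfat : ∀ A ∈ insert univ (compl '' T), IsFatInvariant f A := by
    rintro _ (rfl | ⟨_, hB, rfl⟩)
    · exact isFatInvariant_univ
    · obtain ⟨A, hA, rfl⟩ := hTS hB
      rw [compl_compl]
      exact hS A hA
  obtain ⟨A, hA⟩ := ((hTc.image compl).insert univ).exists_eq_range (insert_nonempty _ _)
  have hAS : ⋂ n, A n = ⋂₀ S := by
    rw [← sInter_range, ← hA, sInter_insert, univ_inter, ← compl_sUnion, hT, compl_sUnion,
      compl_compl_image]
  have hAfat : ∀ n, IsFatInvariant f (A n) := fun n => hfat _ (hA ▸ mem_range_self n)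
  rw [← hAS]
  exact hstr A (fun n => (hAfat n).1) (fun n => (hAfat n).2.1.image_subset)
    (fun n => (hAfat n).2.2)

theorem StronglyIndecomposable.isFatInvariant_fatCore [SecondCountableTopology Y] [Nonempty Y]
    (hstr : StronglyIndecomposable f) : IsFatInvariant f (fatCore f) :=
  hstr.isFatInvariant_sInter fun _ hA => hA

def orbitClosure (f : Y → Y) (U : Set Y) : Set Y :=
  closure (⋃ k, f^[k] '' U)

theorem subset_orbitClosure (U : Set Y) : U ⊆ orbitClosure f U :=
  fun x hx => subset_closure (mem_iUnion.2 ⟨0, x, hx, rfl⟩)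

theorem mapsTo_orbitClosure (hf : Continuous f) (U : Set Y) :
    MapsTo f (orbitClosure f U) (orbitClosure f U) := by
  refine MapsTo.closure (mapsTo_iUnion.2 fun k => ?_) hf
  rintro _ ⟨x, hx, rfl⟩
  exact mem_iUnion.2 ⟨k + 1, x, hx, iterate_succ_apply' f k x⟩

theorem fatCore_subset_orbitClosure (hf : Continuous f) {U : Set Y}
    (hU : (interior U).Nonempty) : fatCore f ⊆ orbitClosure f U :=
  fatCore_subset ⟨isClosed_closure, mapsTo_orbitClosure hf U,
    hU.mono (interior_mono (subset_orbitClosure U))⟩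

theorem Function.IsPeriodicPt.finite_orbitClosure [T1Space Y] {p : Y} {n : ℕ}
    (hp : IsPeriodicPt f n p) (hn : 0 < n) : (orbitClosure f {p}).Finite := by
  have hfin : (⋃ k, f^[k] '' {p}).Finite := by
    refine ((finite_Iio n).image fun k => f^[k] p).subset ?_
    simp only [image_singleton, iUnion_subset_iff, singleton_subset_iff]
    exact fun k => ⟨k % n, Nat.mod_lt k hn, hp.iterate_mod_apply k⟩
  rw [orbitClosure, hfin.isClosed.closure_eq]
  exact hfin

def IsTransitiveOn (f : Y → Y) (s : Set Y) : Prop :=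
  ∀ U V : Set Y, IsOpen U → IsOpen V → (U ∩ s).Nonempty → (V ∩ s).Nonempty →
    ∃ k, ∃ x ∈ U ∩ s, f^[k] x ∈ V

theorem isTransitiveOn_fatCore (hf : Continuous f)
    (hreg : fatCore f ⊆ closure (interior (fatCore f))) : IsTransitiveOn f (fatCore f) := by
  rintro U V hU hV ⟨u, huU, huM⟩ ⟨v, hvV, hvM⟩
  have hUM : (interior (U ∩ interior (fatCore f))).Nonempty := by
    rw [(hU.inter isOpen_interior).interior_eq]
    exact mem_closure_iff.1 (hreg huM) U hU huU
  obtain ⟨_, hyV, hy⟩ := mem_closure_iff.1 (fatCore_subset_orbitClosure hf hUM hvM) V hV hvV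
  obtain ⟨k, x, ⟨hxU, hxM⟩, rfl⟩ := mem_iUnion.1 hy
  exact ⟨k, x, ⟨hxU, interior_subset hxM⟩, hyV⟩

end FatInvariant

section Restriction

variable {Y : Type*} [TopologicalSpace Y] {g : Y → Y} {s : Set Y}

theorem topTransitive_restrict (hs : MapsTo g s s) (h : IsTransitiveOn g s) :
    TopTransitive (hs.restrict g s s) := by
  rintro _ _ hU' hV' ⟨u, hu⟩ ⟨v, hv⟩
  obtain ⟨U, hU, rfl⟩ := isOpen_induced_iff.1 hU'
  obtain ⟨V, hV, rfl⟩ := isOpen_induced_iff.1 hV'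
  obtain ⟨k, x, ⟨hxU, hxs⟩, hkx⟩ := h U V hU hV ⟨u, hu, u.2⟩ ⟨v, hv, v.2⟩
  refine ⟨k, _, ⟨⟨x, hxs⟩, hxU, rfl⟩, ?_⟩
  simpa [mem_preimage, hs.coe_iterate_restrict] using hkx

theorem densePeriodicPts_restrict (hs : MapsTo g s s) (h : s ⊆ closure (s ∩ periodicPts g)) :
    DensePeriodicPts (hs.restrict g s s) := by
  refine dense_iff_inter_open.2 fun U' hU' ⟨u, hu⟩ => ?_
  obtain ⟨U, hU, rfl⟩ := isOpen_induced_iff.1 hU'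
  obtain ⟨z, hzU, hzs, n, hn, hz⟩ := mem_closure_iff.1 (h u.2) U hU hu
  exact ⟨⟨z, hzs⟩, hzU, n, hn, Subtype.ext (by rw [hs.coe_iterate_restrict]; exact hz)⟩

theorem exists_isOpen_inter_iUnion_eq {ι : Type*} [Finite ι] {J : ι → Set Y}
    (hJ : ∀ i, IsClosed (J i)) (hdisj : Pairwise (Disjoint on J)) (i : ι) :
    ∃ W, IsOpen W ∧ W ∩ ⋃ j, J j = J i := by
  refine ⟨(⋃ j ∈ ({i}ᶜ : Set ι), J j)ᶜ,
    ((toFinite _).isClosed_biUnion fun j _ => hJ j).isOpen_compl, ?_⟩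
  ext z
  simp only [mem_inter_iff, mem_compl_iff, mem_iUnion, mem_singleton_iff, exists_prop, not_exists,
    not_and]
  refine ⟨fun ⟨hz, j, hj⟩ => ?_, fun hz => ⟨fun j hji hj => (hdisj hji).le_bot ⟨hj, hz⟩, i, hz⟩⟩
  by_contra hzi
  exact hz j (fun hji => hzi (hji ▸ hj)) hj

theorem IsTransitiveOn.iterate_of_dvd {M W : Set Y} (h : IsTransitiveOn g M) (hM : MapsTo g M M)
    (hW : IsOpen W) (hs : W ∩ M = s) {n : ℕ} (hdvd : ∀ x ∈ s, ∀ k, g^[k] x ∈ s → n ∣ k) :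
    IsTransitiveOn g^[n] s := by
  subst hs
  intro U V hU hV hUs hVs
  obtain ⟨k, x, ⟨⟨hxU, hxW⟩, hxM⟩, hkxV, hkxW⟩ := h (U ∩ W) (V ∩ W) (hU.inter hW) (hV.inter hW)
    (by rwa [inter_assoc]) (by rwa [inter_assoc])
  obtain ⟨m, rfl⟩ := hdvd x ⟨hxW, hxM⟩ _ ⟨hkxW, hM.iterate _ hxM⟩
  exact ⟨m, x, ⟨hxU, hxW, hxM⟩, by rwa [← iterate_mul]⟩

theorem subset_closure_periodicPts_iterate_of_dvd {M W : Set Y}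
    (h : M ⊆ closure (M ∩ periodicPts g)) (hW : IsOpen W) (hs : W ∩ M = s) {n : ℕ}
    (hdvd : ∀ x ∈ s, ∀ k, g^[k] x ∈ s → n ∣ k) : s ⊆ closure (s ∩ periodicPts g^[n]) := by
  subst hs
  refine fun z ⟨hzW, hzM⟩ => mem_closure_iff.2 fun O hO hzO => ?_
  obtain ⟨y, ⟨hyO, hyW⟩, hyM, N, hN, hy⟩ :=
    mem_closure_iff.1 (h hzM) (O ∩ W) (hO.inter hW) ⟨hzO, hzW⟩
  obtain ⟨m, rfl⟩ := hdvd y ⟨hyW, hyM⟩ N (by rw [hy]; exact ⟨hyW, hyM⟩)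
  exact ⟨y, hyO, ⟨hyW, hyM⟩, m, Nat.pos_of_mul_pos_left hN,
    by rwa [IsPeriodicPt, ← iterate_mul]⟩

end Restriction

section Components

variable {Y : Type*} [TopologicalSpace Y] {f : Y → Y} {s : Set Y} {x : Y}

theorem IsClosed.connectedComponentIn (hs : IsClosed s) (x : Y) :
    IsClosed (connectedComponentIn s x) := by
  by_cases hx : x ∈ s
  · exact isClosed_of_closure_subset <|
      isPreconnected_connectedComponentIn.closure.subset_connectedComponentIn
        (subset_closure (mem_connectedComponentIn hx))
        (closure_minimal (connectedComponentIn_subset _ _) hs)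
  · rw [connectedComponentIn_eq_empty hx]
    exact isClosed_empty

theorem image_connectedComponentIn_subset (hf : ContinuousOn f s) (hs : MapsTo f s s)
    (hx : x ∈ s) : f '' connectedComponentIn s x ⊆ connectedComponentIn s (f x) :=
  (hf.image_connectedComponentIn_subset hx).trans
    (connectedComponentIn_mono _ hs.image_subset)

/-- On a component `C` of `s`, this is the component of `s` containing `f '' C`. -/
def componentMap (f : Y → Y) (s C : Set Y) : Set Y :=
  ⋃ x ∈ C, connectedComponentIn s (f x)

theorem componentMap_connectedComponentIn (hf : ContinuousOn f s) (hs : MapsTo f s s)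
    (hx : x ∈ s) :
    componentMap f s (connectedComponentIn s x) = connectedComponentIn s (f x) := by
  refine Subset.antisymm (iUnion₂_subset fun z hz => ?_)
    (subset_biUnion_of_mem (u := fun z => connectedComponentIn s (f z))
      (mem_connectedComponentIn hx))
  rw [connectedComponentIn_eq (image_connectedComponentIn_subset hf hs hx ⟨z, hz, rfl⟩)]

theorem iterate_componentMap_connectedComponentIn (hf : ContinuousOn f s) (hs : MapsTo f s s)
    (hx : x ∈ s) (k : ℕ) :
    (componentMap f s)^[k] (connectedComponentIn s x) = connectedComponentIn s (f^[k] x) := by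
  induction k with
  | zero => rfl
  | succ k ih =>
    rw [iterate_succ_apply', ih, componentMap_connectedComponentIn hf hs (hs.iterate k hx),
      iterate_succ_apply']

theorem connectedComponentIn_iterate_eq_iff (hf : ContinuousOn f s) (hs : MapsTo f s s)
    (hx : x ∈ s) (hper : connectedComponentIn s x ∈ periodicPts (componentMap f s)) {m n : ℕ} :
    connectedComponentIn s (f^[m] x) = connectedComponentIn s (f^[n] x) ↔
      m ≡ n [MOD minimalPeriod (componentMap f s) (connectedComponentIn s x)] := by
  rw [← iterate_eq_iterate_iff_modEq hper, iterate_componentMap_connectedComponentIn hf hs hx,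
    iterate_componentMap_connectedComponentIn hf hs hx]

theorem image_connectedComponentIn_iterate (hf : ContinuousOn f s) (hs : MapsTo f s s)
    (hsurj : s ⊆ f '' s) (hx : x ∈ s)
    (hper : connectedComponentIn s x ∈ periodicPts (componentMap f s))
    (hcover : s ⊆ ⋃ k, connectedComponentIn s (f^[k] x)) (k : ℕ) :
    f '' connectedComponentIn s (f^[k] x) = connectedComponentIn s (f^[k + 1] x) := by
  have himage : ∀ j, f '' connectedComponentIn s (f^[j] x) ⊆
      connectedComponentIn s (f^[j + 1] x) := fun j => by
    rw [iterate_succ_apply']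
    exact image_connectedComponentIn_subset hf hs (hs.iterate j hx)
  refine (himage k).antisymm fun z hz => ?_
  obtain ⟨y, hy, rfl⟩ := hsurj (connectedComponentIn_subset _ _ hz)
  obtain ⟨j, hj⟩ := mem_iUnion.1 (hcover hy)
  have hjk := (connectedComponentIn_iterate_eq_iff hf hs hx hper).1
    ((connectedComponentIn_eq (himage j ⟨y, hj, rfl⟩)).trans (connectedComponentIn_eq hz).symm)
  rw [← (connectedComponentIn_iterate_eq_iff hf hs hx hper).2 (Nat.ModEq.add_right_cancel' 1 hjk)]
  exact mem_image_of_mem f hj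

theorem fatCore_subset_closure_iUnion_connectedComponentIn (hf : Continuous f) {α : Y}
    (hα : (interior (connectedComponentIn (fatCore f) α)).Nonempty) :
    fatCore f ⊆ closure (⋃ k, connectedComponentIn (fatCore f) (f^[k] α)) := by
  have hαM : α ∈ fatCore f := connectedComponentIn_nonempty_iff.1 (hα.mono interior_subset)
  exact (fatCore_subset_orbitClosure hf hα).trans (closure_mono (iUnion_mono fun k =>
    image_connectedComponentIn_subset (hf.iterate k).continuousOn (mapsTo_fatCore.iterate k) hαM))

end Components

theorem biInter_Icc_union_subset_insert {X : Type*} [LinearOrder X] [DenselyOrdered X] {u v : X}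
    (huv : u < v) (P : Set X) : ⋂ y ∈ Ioc u v, (Icc u y ∪ P) ⊆ insert u P := by
  intro z hz
  by_contra hzP
  rw [mem_insert_iff, not_or] at hzP
  have hmem : ∀ y ∈ Ioc u v, z ∈ Icc u y := fun y hy =>
    (mem_iInter₂.1 hz y hy).resolve_right hzP.2
  obtain ⟨y, huy, hyz⟩ := exists_between (lt_min ((hmem v ⟨huv, le_rfl⟩).1.lt_of_ne' hzP.1) huv)
  exact (hmem y ⟨huy, hyz.le.trans (min_le_right _ _)⟩).2.not_gt (hyz.trans_le (min_le_left _ _))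

section LinearOrder

variable {X : Type*} [LinearOrder X] [DenselyOrdered X] [TopologicalSpace X] [OrderTopology X]
  {f : X → X}

theorem IsPreconnected.interior_nonempty_of_nontrivial {S : Set X} (hS : IsPreconnected S)
    (hnt : S.Nontrivial) : (interior S).Nonempty := by
  obtain ⟨u, hu, v, hv, huv⟩ := hnt.exists_lt
  exact (nonempty_Ioo.2 huv).mono
    (isOpen_Ioo.subset_interior_iff.2 (Ioo_subset_Icc_self.trans (hS.Icc_subset hu hv)))

theorem IsPreconnected.subset_closure_interior {S : Set X} (hS : IsPreconnected S)
    (hnt : S.Nontrivial) : S ⊆ closure (interior S) := by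
  intro z hz
  obtain ⟨w, hw, hwz⟩ := hnt.exists_ne z
  rcases hwz.lt_or_gt with h | h
  · refine closure_mono (isOpen_Ioo.subset_interior_iff.2
      (Ioo_subset_Icc_self.trans (hS.Icc_subset hw hz))) ?_
    rw [closure_Ioo h.ne]
    exact right_mem_Icc.2 h.le
  · refine closure_mono (isOpen_Ioo.subset_interior_iff.2
      (Ioo_subset_Icc_self.trans (hS.Icc_subset hz hw))) ?_
    rw [closure_Ioo h.ne]
    exact left_mem_Icc.2 h.le

theorem interior_nonempty_of_interior_insert [Nontrivial X] {u : X} {P : Set X}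
    (h : (interior (insert u P)).Nonempty) : (interior P).Nonempty := by
  obtain ⟨s, t, hst, hsub⟩ := isOpen_interior.exists_Ioo_subset h
  obtain ⟨s', hs't, hP⟩ : ∃ s', s' < t ∧ Ioo s' t ⊆ P := by
    by_cases hu : u < t
    · refine ⟨max s u, max_lt hst hu, fun z hz => ?_⟩
      exact (interior_subset (hsub ⟨(le_max_left _ _).trans_lt hz.1, hz.2⟩)).resolve_left
        ((le_max_right _ _).trans_lt hz.1).ne'
    · exact ⟨s, hst, fun z hz =>
        (interior_subset (hsub hz)).resolve_left (hz.2.trans_le (not_lt.1 hu)).ne⟩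
  exact (nonempty_Ioo.2 hs't).mono (isOpen_Ioo.subset_interior_iff.2 hP)

/-- If `f` collapsed `[u, v] ⊆ S` to a point, strong indecomposability applied to the sets
`[u, y] ∪ P`, `P` the orbit closure of that point, would give `P` nonempty interior. Then
`P ⊇ fatCore f ⊇ (u, v)`, so the orbit returns to `[u, v]`, the point is periodic and `P` is
finite. -/
theorem StronglyIndecomposable.nontrivial_image [SecondCountableTopology X] [Nontrivial X]
    (hstr : StronglyIndecomposable f) (hf : Continuous f) {S : Set X} (hS : IsPreconnected S)
    (hnt : S.Nontrivial) (hSM : S ⊆ fatCore f) : (f '' S).Nontrivial := by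
  by_contra hsub
  rw [not_nontrivial_iff] at hsub
  obtain ⟨u, hu, v, hv, huv⟩ := hnt.exists_lt
  have hIcc : Icc u v ⊆ S := hS.Icc_subset hu hv
  set P := orbitClosure f {f u}
  have hfam : ∀ y ∈ Ioc u v, IsFatInvariant f (Icc u y ∪ P) := fun y hy =>
    ⟨isClosed_Icc.union isClosed_closure,
      fun z hz => Or.inr <| hz.elim
        (fun hz => hsub (mem_image_of_mem f (hIcc ⟨hz.1, hz.2.trans hy.2⟩))
          (mem_image_of_mem f hu) ▸ subset_orbitClosure _ rfl)
        (fun hz => mapsTo_orbitClosure hf _ hz),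
      (nonempty_Ioo.2 hy.1).mono
        (isOpen_Ioo.subset_interior_iff.2 (Ioo_subset_Icc_self.trans subset_union_left))⟩
  have : Nonempty X := ⟨u⟩
  have hinter := hstr.isFatInvariant_sInter (S := (fun y => Icc u y ∪ P) '' Ioc u v)
    (by rintro _ ⟨y, hy, rfl⟩; exact hfam y hy)
  rw [sInter_image] at hinter
  have hPfat : IsFatInvariant f P := ⟨isClosed_closure, mapsTo_orbitClosure hf _,
    interior_nonempty_of_interior_insert
      (hinter.2.2.mono (interior_mono (biInter_Icc_union_subset_insert huv P)))⟩
  have hIooP : Ioo u v ⊆ P :=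
    Ioo_subset_Icc_self.trans (hIcc.trans (hSM.trans (fatCore_subset hPfat)))
  obtain ⟨z, hz⟩ := nonempty_Ioo.2 huv
  obtain ⟨_, hw, hwP⟩ := mem_closure_iff.1 (hIooP hz) _ isOpen_Ioo hz
  obtain ⟨k, _, rfl, rfl⟩ := mem_iUnion.1 hwP
  have hper : IsPeriodicPt f (k + 1) (f u) := by
    rw [IsPeriodicPt, IsFixedPt, iterate_succ_apply']
    exact hsub (mem_image_of_mem f (hIcc (Ioo_subset_Icc_self hw))) (mem_image_of_mem f hu)
  exact Ioo_infinite huv ((hper.finite_orbitClosure k.succ_pos).subset hIooP)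

theorem StronglyIndecomposable.nontrivial_iterate_image [SecondCountableTopology X]
    [Nontrivial X] (hstr : StronglyIndecomposable f) (hf : Continuous f) {S : Set X}
    (hS : IsPreconnected S) (hnt : S.Nontrivial) (hSM : S ⊆ fatCore f) (k : ℕ) :
    (f^[k] '' S).Nontrivial := by
  induction k with
  | zero => rwa [iterate_zero, image_id]
  | succ k ih =>
    rw [iterate_succ', image_comp]
    exact hstr.nontrivial_image hf (hS.image _ (hf.iterate k).continuousOn) ih
      ((image_mono hSM).trans (mapsTo_fatCore.iterate k).image_subset)

/-- The orbit of `f '' C`, `C` the component, is dense in `fatCore f`, so it comes back into the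
interior of `C`. -/
theorem StronglyIndecomposable.connectedComponentIn_mem_periodicPts [SecondCountableTopology X]
    [Nontrivial X] (hstr : StronglyIndecomposable f) (hf : Continuous f) {α : X}
    (hα : (connectedComponentIn (fatCore f) α).Nontrivial) :
    connectedComponentIn (fatCore f) α ∈ periodicPts (componentMap f (fatCore f)) := by
  have hαM : α ∈ fatCore f := connectedComponentIn_nonempty_iff.1 hα.nonempty
  have hC : IsPreconnected (connectedComponentIn (fatCore f) α) :=
    isPreconnected_connectedComponentIn
  have hCM := connectedComponentIn_subset (fatCore f) α
  obtain ⟨z, hz⟩ := hC.interior_nonempty_of_nontrivial hα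
  have hdense := fatCore_subset_orbitClosure hf
    ((hC.image f hf.continuousOn).interior_nonempty_of_nontrivial
      (hstr.nontrivial_image hf hC hα hCM)) (hCM (interior_subset hz))
  obtain ⟨_, hwC, hw⟩ := mem_closure_iff.1 hdense _ isOpen_interior hz
  obtain ⟨k, _, ⟨x, hx, rfl⟩, rfl⟩ := mem_iUnion.1 hw
  refine ⟨k + 1, k.succ_pos, ?_⟩
  rw [IsPeriodicPt, IsFixedPt,
    iterate_componentMap_connectedComponentIn hf.continuousOn mapsTo_fatCore hαM]
  have hxk : f^[k] (f x) ∈ connectedComponentIn (fatCore f) (f^[k + 1] α) :=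
    image_connectedComponentIn_subset (hf.iterate (k + 1)).continuousOn
      (mapsTo_fatCore.iterate _) hαM ⟨x, hx, iterate_succ_apply f k x⟩
  exact (connectedComponentIn_eq hxk).trans (connectedComponentIn_eq (interior_subset hwC)).symm

end LinearOrder

section ConditionallyCompleteLinearOrder

variable {X : Type*} [ConditionallyCompleteLinearOrder X] [DenselyOrdered X] [TopologicalSpace X]
  [OrderTopology X] {f g : X → X}

theorem StronglyIndecomposable.exists_nontrivial_connectedComponentIn [SecondCountableTopology X]
    [Nontrivial X] (hstr : StronglyIndecomposable f) :
    ∃ α, (connectedComponentIn (fatCore f) α).Nontrivial := by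
  obtain ⟨s, t, hst, hsub⟩ := isOpen_interior.exists_Ioo_subset hstr.isFatInvariant_fatCore.2.2
  obtain ⟨α, hα⟩ := nonempty_Ioo.2 hst
  exact ⟨α, (Ioo_infinite hst).nontrivial.mono
    (isPreconnected_Ioo.subset_connectedComponentIn hα (hsub.trans interior_subset))⟩

theorem StronglyIndecomposable.fatCore_subset_closure_interior [SecondCountableTopology X]
    [Nontrivial X] (hstr : StronglyIndecomposable f) (hf : Continuous f) :
    fatCore f ⊆ closure (interior (fatCore f)) := by
  obtain ⟨α, hα⟩ := hstr.exists_nontrivial_connectedComponentIn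
  have hC : IsPreconnected (connectedComponentIn (fatCore f) α) :=
    isPreconnected_connectedComponentIn
  have hCM := connectedComponentIn_subset (fatCore f) α
  refine (fatCore_subset_orbitClosure hf (hC.interior_nonempty_of_nontrivial hα)).trans
    (closure_minimal (iUnion_subset fun k => ?_) isClosed_closure)
  exact ((hC.image _ (hf.iterate k).continuousOn).subset_closure_interior
    (hstr.nontrivial_iterate_image hf hC hα hCM k)).trans
    (closure_mono (interior_mono ((image_mono hCM).trans (mapsTo_fatCore.iterate k).image_subset)))

theorem StronglyIndecomposable.image_fatCore [SecondCountableTopology X] [CompactSpace X]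
    [Nontrivial X] (hstr : StronglyIndecomposable f) (hf : Continuous f) :
    f '' fatCore f = fatCore f := by
  obtain ⟨α, hα⟩ := hstr.exists_nontrivial_connectedComponentIn
  have hC : IsPreconnected (connectedComponentIn (fatCore f) α) :=
    isPreconnected_connectedComponentIn
  have hCM := connectedComponentIn_subset (fatCore f) α
  refine mapsTo_fatCore.image_subset.antisymm (fatCore_subset ⟨
    (isClosed_fatCore.isCompact.image hf).isClosed,
    fun _ ⟨x, hx, hy⟩ => hy ▸ mem_image_of_mem f (mapsTo_fatCore hx), ?_⟩)
  exact ((hC.image f hf.continuousOn).interior_nonempty_of_nontrivial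
    (hstr.nontrivial_image hf hC hα hCM)).mono (interior_mono (image_mono hCM))

/-- The least `k` provided by `h` still satisfies `x ≤ g^[k] x`, so the intermediate value
theorem applies to `g^[k]` on `[x, w]`. -/
theorem exists_mem_Icc_periodicPts_of_iterate_lt (hg : Continuous g) {x : X} (hx : x ≤ g x)
    (h : ∃ k, 0 < k ∧ ∃ w ∈ Icc x (g x), g^[k] w < x) :
    ∃ z ∈ Icc x (g x), z ∈ periodicPts g := by
  classical
  obtain ⟨hk, w, hw, hwx⟩ := Nat.find_spec h
  have hxk : x ≤ g^[Nat.find h] x := by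
    obtain ⟨j, hj⟩ := Nat.exists_eq_succ_of_ne_zero hk.ne'
    rw [hj, iterate_succ_apply]
    rcases j.eq_zero_or_pos with rfl | hj0
    · exact hx
    · exact not_lt.1 fun hlt =>
        Nat.find_min h (by omega : j < Nat.find h) ⟨hj0, g x, right_mem_Icc.2 hx, hlt⟩
  obtain ⟨z, hz, hfix⟩ := exists_mem_Icc_isFixedPt (hg.iterate _).continuousOn hw.1 hxk
    (hwx.le.trans hw.1)
  exact ⟨z, ⟨hz.1, hz.2.trans hw.2⟩, _, hk, hfix⟩

/-- Unless `exists_mem_Icc_periodicPts_of_iterate_lt` applies to `f^[r]` near `x` or, in the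
order dual, to `f^[s]` near `y`, the iterate `f^[r * s]` moves `x` to the right and `y` to the
left. -/
theorem exists_mem_Icc_periodicPts (hf : Continuous f) {x y : X} {r s : ℕ} (hr : 0 < r)
    (hs : 0 < s) (hxy : x ≤ y) (hy : y < f^[r] x) (hx : f^[s] y < x) :
    ∃ z ∈ Icc (f^[s] y) (f^[r] x), z ∈ periodicPts f := by
  by_cases hA : ∃ k, 0 < k ∧ ∃ w ∈ Icc x (f^[r] x), (f^[r])^[k] w < x
  · obtain ⟨z, hz, hper⟩ :=
      exists_mem_Icc_periodicPts_of_iterate_lt (hf.iterate r) (hxy.trans hy.le) hA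
    exact ⟨z, ⟨hx.le.trans hz.1, hz.2⟩, periodicPts_iterate_subset hr hper⟩
  by_cases hB : ∃ k, 0 < k ∧ ∃ w ∈ Icc (f^[s] y) y, y < (f^[s])^[k] w
  · obtain ⟨k, hk, w, hw, hlt⟩ := hB
    have hdual := exists_mem_Icc_periodicPts_of_iterate_lt (X := Xᵒᵈ) (g := f^[s]) (x := y)
      (hf.iterate s)
    obtain ⟨z, hz, hper⟩ := hdual (hx.le.trans hxy) ⟨k, hk, w, ⟨hw.2, hw.1⟩, hlt⟩
    have hzy : @LE.le X _ z y := hz.1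
    exact ⟨z, ⟨hz.2, hzy.trans hy.le⟩, periodicPts_iterate_subset hs hper⟩
  push Not at hA hB
  have hxr : x ≤ f^[r * s] x := by
    rw [iterate_mul]
    exact hA s hs x (left_mem_Icc.2 (hxy.trans hy.le))
  have hys : f^[r * s] y ≤ y := by
    rw [mul_comm, iterate_mul]
    exact hB r hr y (right_mem_Icc.2 (hx.le.trans hxy))
  obtain ⟨z, hz, hfix⟩ := exists_mem_Icc_isFixedPt (hf.iterate _).continuousOn hxy hxr hys
  exact ⟨z, ⟨hx.le.trans hz.1, hz.2.trans hy.le⟩, _, Nat.mul_pos hr hs, hfix⟩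

/-- In a small interval `(p, q)` inside the interior of `fatCore f`, transitivity sends a point
`x` near `p` close to `q`, and a point `y` between them to the left of `x`. -/
theorem StronglyIndecomposable.fatCore_subset_closure_periodicPts [SecondCountableTopology X]
    [Nontrivial X] (hstr : StronglyIndecomposable f) (hf : Continuous f) :
    fatCore f ⊆ closure (fatCore f ∩ periodicPts f) := by
  have hreg := hstr.fatCore_subset_closure_interior hf
  have htrans := isTransitiveOn_fatCore hf hreg
  refine fun u huM => mem_closure_iff.2 fun O hO huO => ?_
  obtain ⟨p, q, hpq, hsub⟩ := (hO.inter isOpen_interior).exists_Ioo_subset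
    (mem_closure_iff.1 (hreg huM) O hO huO)
  have hsubM : Ioo p q ⊆ fatCore f := fun z hz => interior_subset (hsub hz).2
  have hmeets : ∀ {s t}, p ≤ s → s < t → t ≤ q → (Ioo s t ∩ fatCore f).Nonempty :=
    fun hps hst htq => let ⟨z, hz⟩ := nonempty_Ioo.2 hst
      ⟨z, hz, hsubM ⟨hps.trans_lt hz.1, hz.2.trans_le htq⟩⟩
  obtain ⟨γ₁, hpγ₁, hγ₁q⟩ := exists_between hpq
  obtain ⟨γ₂, hγ₁γ₂, hγ₂q⟩ := exists_between hγ₁q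
  obtain ⟨r, x, ⟨hx, -⟩, hrx⟩ := htrans _ _ isOpen_Ioo isOpen_Ioo
    (hmeets le_rfl hpγ₁ hγ₁q.le) (hmeets (hpγ₁.trans hγ₁γ₂).le hγ₂q le_rfl)
  obtain ⟨s, y, ⟨hy, -⟩, hsy⟩ := htrans _ _ isOpen_Ioo isOpen_Ioo
    (hmeets hpγ₁.le hγ₁γ₂ hγ₂q.le) (hmeets le_rfl hx.1 (hx.2.trans hγ₁q).le)
  have hr : 0 < r := Nat.pos_of_ne_zero fun hr0 => by
    subst hr0
    exact (hx.2.trans (hγ₁γ₂.trans hrx.1)).false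
  have hs : 0 < s := Nat.pos_of_ne_zero fun hs0 => by
    subst hs0
    exact (hsy.2.trans (hx.2.trans hy.1)).false
  obtain ⟨z, hz, hper⟩ := exists_mem_Icc_periodicPts hf hr hs (hx.2.trans hy.1).le
    (hy.2.trans hrx.1) hsy.2
  have hzpq : z ∈ Ioo p q := ⟨hsy.1.trans_le hz.1, hz.2.trans_lt hrx.2⟩
  exact ⟨z, (hsub hzpq).1, hsubM hzpq, hper⟩

theorem StronglyIndecomposable.exists_cycle [SecondCountableTopology X] [CompactSpace X]
    [Nontrivial X] (hstr : StronglyIndecomposable f) (hf : Continuous f) :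
    ∃ n, ∃ hn : 0 < n, ∃ J : Fin n → Set X,
      (∀ i, IsClosed (J i)) ∧ (∀ i, (J i).OrdConnected) ∧ (∀ i, (J i).Nontrivial) ∧
      Pairwise (Disjoint on J) ∧ (∀ i, f '' J i = J ⟨(i + 1) % n, Nat.mod_lt _ hn⟩) ∧
      ⋃ i, J i = fatCore f ∧ (∀ i, MapsTo f^[n] (J i) (J i)) ∧
      ∀ i, ∀ x ∈ J i, ∀ k, f^[k] x ∈ J i → n ∣ k := by
  obtain ⟨α, hα⟩ := hstr.exists_nontrivial_connectedComponentIn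
  have hαM : α ∈ fatCore f := connectedComponentIn_nonempty_iff.1 hα.nonempty
  have hper := hstr.connectedComponentIn_mem_periodicPts hf hα
  set n := minimalPeriod (componentMap f (fatCore f)) (connectedComponentIn (fatCore f) α)
  set c : ℕ → Set X := fun k => connectedComponentIn (fatCore f) (f^[k] α)
  have hn : 0 < n := minimalPeriod_pos_of_mem_periodicPts hper
  have hc : ∀ k l, c k = c l ↔ k ≡ l [MOD n] := fun k l =>
    connectedComponentIn_iterate_eq_iff hf.continuousOn mapsTo_fatCore hαM hper
  have hmeet : ∀ k l, (c k ∩ c l).Nonempty → k ≡ l [MOD n] := fun k l ⟨_, hk, hl⟩ =>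
    (hc k l).1 ((connectedComponentIn_eq hk).trans (connectedComponentIn_eq hl).symm)
  have himage : ∀ k m, f^[m] '' c k ⊆ c (k + m) := fun k m => by
    simpa only [c, ← iterate_add_apply, add_comm m] using image_connectedComponentIn_subset
      (hf.iterate m).continuousOn (mapsTo_fatCore.iterate m) (mapsTo_fatCore.iterate k hαM)
  have hcover : fatCore f ⊆ ⋃ i : Fin n, c i := by
    refine (fatCore_subset_closure_iUnion_connectedComponentIn hf
      (isPreconnected_connectedComponentIn.interior_nonempty_of_nontrivial hα)).trans
      (closure_minimal (iUnion_subset fun k => ?_)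
        (isClosed_iUnion_of_finite fun i => isClosed_fatCore.connectedComponentIn _))
    show c k ⊆ _
    rw [(hc k (k % n)).2 (Nat.mod_modEq k n).symm]
    exact subset_iUnion (fun i : Fin n => c i) ⟨k % n, Nat.mod_lt k hn⟩
  refine ⟨n, hn, fun i => c i, fun i => isClosed_fatCore.connectedComponentIn _,
    fun i => isPreconnected_connectedComponentIn.ordConnected, fun i => ?_, fun i j hij => ?_,
    fun i => ?_, (iUnion_subset fun i => connectedComponentIn_subset _ _).antisymm hcover,
    fun i x hx => ?_, fun i x hx k hkx => ?_⟩
  · refine (hstr.nontrivial_iterate_image hf isPreconnected_connectedComponentIn hα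
      (connectedComponentIn_subset _ _) i).mono ?_
    simpa only [c, zero_add, iterate_zero_apply] using himage 0 i
  · refine disjoint_iff_inter_eq_empty.2 (not_nonempty_iff_eq_empty.1 fun h => hij ?_)
    exact Fin.ext ((hmeet _ _ h).eq_of_lt_of_lt i.2 j.2)
  · show f '' c i = c ((i + 1) % n)
    rw [(hc _ _).2 (Nat.mod_modEq _ _)]
    exact image_connectedComponentIn_iterate hf.continuousOn mapsTo_fatCore
      (hstr.image_fatCore hf).symm.subset hαM hper
      (hcover.trans (iUnion_subset fun i => subset_iUnion c i)) i
  · show f^[n] x ∈ c i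
    rw [← (hc _ _).2 Nat.add_modEq_right]
    exact himage i n ⟨x, hx, rfl⟩
  · exact Nat.add_modEq_left_iff.1 (hmeet _ _ ⟨_, himage i k ⟨x, hx, rfl⟩, hkx⟩)

end ConditionallyCompleteLinearOrder

theorem stronglyIndecomposable_interval_map_cycle_of_chaotic_intervals
    (a b : ℝ) (hab : a < b)
    (f : Set.Icc a b → Set.Icc a b) (hf : Continuous f)
    (hstr : StronglyIndecomposable f) :
    ∃ n : ℕ, ∃ hn : 0 < n, ∃ J : Fin n → Set (Set.Icc a b),
      (∀ i, IsClosed (J i)) ∧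
      (∀ i, (J i).OrdConnected) ∧
      (∀ i, ∃ x ∈ J i, ∃ y ∈ J i, x ≠ y) ∧
      Pairwise (Function.onFun Disjoint J) ∧
      (∀ i : Fin n, f '' J i = J ⟨((i : ℕ) + 1) % n, Nat.mod_lt _ hn⟩) ∧
      (∃ hE : Set.MapsTo f (⋃ i, J i) (⋃ i, J i),
        TopTransitive (Set.MapsTo.restrict f _ _ hE) ∧
        DensePeriodicPts (Set.MapsTo.restrict f _ _ hE)) ∧
      (∀ i : Fin n, ∃ hJi : Set.MapsTo (f^[n]) (J i) (J i),
        TopTransitive (Set.MapsTo.restrict (f^[n]) _ _ hJi) ∧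
        DensePeriodicPts (Set.MapsTo.restrict (f^[n]) _ _ hJi)) := by
  have : Fact (a ≤ b) := ⟨hab.le⟩
  have : Nontrivial (Icc a b) :=
    ⟨⟨⟨a, le_rfl, hab.le⟩, ⟨b, hab.le, le_rfl⟩, fun h => hab.ne (congrArg Subtype.val h)⟩⟩
  obtain ⟨n, hn, J, hclosed, hconn, hnt, hdisj, himage, hunion, hmaps, hdvd⟩ :=
    hstr.exists_cycle hf
  have htrans := isTransitiveOn_fatCore hf (hstr.fatCore_subset_closure_interior hf)
  have hper := hstr.fatCore_subset_closure_periodicPts hf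
  have hE : MapsTo f (⋃ i, J i) (⋃ i, J i) := hunion ▸ mapsTo_fatCore
  refine ⟨n, hn, J, hclosed, hconn, hnt, hdisj, himage,
    ⟨hE, topTransitive_restrict hE (hunion ▸ htrans),
      densePeriodicPts_restrict hE (hunion ▸ hper)⟩, fun i => ?_⟩
  obtain ⟨W, hW, hWJ⟩ := exists_isOpen_inter_iUnion_eq hclosed hdisj i
  rw [hunion] at hWJ
  exact ⟨hmaps i,
    topTransitive_restrict (hmaps i) (htrans.iterate_of_dvd mapsTo_fatCore hW hWJ (hdvd i)),
    densePeriodicPts_restrict (hmaps i)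
      (subset_closure_periodicPts_iterate_of_dvd hper hW hWJ (hdvd i))⟩
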